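/- arXiv:2206.12234 — 2 statements merged into one kernel-verified Lean document; each statement's English description precedes it below -/
import Mathlib

section
/- Let ν = Σ_{i=1}^N α_i δ_{x_i} be a probability measure with α_i > 0, Σα_i = 1, x_i distinct, and μ a Borel probability measure on S. Then ‖ν − μ‖*_FM equals the supremum of ∫ h_θ d(ν−μ) over θ ∈ [−1,1]^N with max_i θ_i = 1, where h_θ(x) = max(−1, max_i(θ_i − d(x_i,x))). -/
/-!
Every `h_θ` with `θ ∈ [-1,1]^N` is itself 1-Lipschitz and bounded by 1, which gives one
inequality. Conversely, given an admissible `f`, shift it by `c = 1 - max_i f(x_i) ≥ 0` and put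
`θ_i = f(x_i) + c`. Since `h_θ` is the least 1-Lipschitz function that is `≥ -1` and `≥ θ_i` at
`x_i`, we get `h_θ ≤ f + c` everywhere with equality at the atoms. As `ν` only sees the atoms,
`∫ h_θ dν = ∫ f dν + c`, while `∫ h_θ dμ ≤ ∫ f dμ + c`; so `h_θ` does at least as well as `f`.
-/

open MeasureTheory Finset

theorem LipschitzWith.finset_sup' {X ι : Type*} [PseudoEMetricSpace X] {s : Finset ι}
    (hs : s.Nonempty) {K : NNReal} {f : ι → X → ℝ} (hf : ∀ i ∈ s, LipschitzWith K (f i)) :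
    LipschitzWith K fun y => s.sup' hs fun i => f i y := by
  simp_rw [← Finset.sup'_apply]
  exact Finset.sup'_induction hs f (fun g hg g' hg' => max_self K ▸ hg.max hg') hf

section ConeEnvelope

variable {S ι : Type*} [MetricSpace S] {s : Finset ι} (hs : s.Nonempty) (x : ι → S)

/-- The function `h_θ` of the paper. -/
noncomputable def coneEnvelope (θ : ι → ℝ) (y : S) : ℝ :=
  max (-1) (s.sup' hs fun i => θ i - dist (x i) y)

theorem lipschitzWith_coneEnvelope (θ : ι → ℝ) : LipschitzWith 1 (coneEnvelope hs x θ) :=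
  (LipschitzWith.finset_sup' hs fun i _ => by
    simpa using (LipschitzWith.const (θ i)).sub (LipschitzWith.dist_right (x i))).const_max (-1)

theorem abs_coneEnvelope_le_one {θ : ι → ℝ} (hθ : ∀ i ∈ s, θ i ≤ 1) (y : S) :
    |coneEnvelope hs x θ y| ≤ 1 := by
  refine abs_le.2 ⟨le_max_left _ _, max_le (by norm_num) (Finset.sup'_le _ _ fun i hi => ?_)⟩
  linarith [hθ i hi, dist_nonneg (x := x i) (y := y)]

theorem le_coneEnvelope_self (θ : ι → ℝ) {i : ι} (hi : i ∈ s) :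
    θ i ≤ coneEnvelope hs x θ (x i) := by
  refine le_max_of_le_right (le_trans ?_ (Finset.le_sup' _ hi))
  simp

theorem coneEnvelope_le {θ : ι → ℝ} {g : S → ℝ} (hg : LipschitzWith 1 g)
    (hθg : ∀ i ∈ s, θ i ≤ g (x i)) {y : S} (hy : -1 ≤ g y) :
    coneEnvelope hs x θ y ≤ g y := by
  refine max_le hy (Finset.sup'_le _ _ fun i hi => ?_)
  have := hg.le_add_mul (x i) y
  push_cast at this
  linarith [hθg i hi]

end ConeEnvelope

section Discrete

variable {X ι : Type*} [MeasurableSpace X] [Fintype ι] (x : ι → X) {α : ι → ℝ}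

theorem integral_sum_smul_dirac [MeasurableSingletonClass X] (hα : ∀ i, 0 ≤ α i) (g : X → ℝ) :
    ∫ y, g y ∂(∑ i, ENNReal.ofReal (α i) • Measure.dirac (x i)) = ∑ i, α i * g (x i) := by
  rw [integral_finsetSum_measure fun i _ =>
    (integrable_dirac (by simp)).smul_measure ENNReal.ofReal_ne_top]
  refine Finset.sum_congr rfl fun i _ => ?_
  rw [integral_smul_measure, integral_dirac, smul_eq_mul, ENNReal.toReal_ofReal (hα i)]

theorem integral_sub_integral_le_of_le_add_const [MeasurableSingletonClass X]
    (hα : ∀ i, 0 ≤ α i) (hsum : ∑ i, α i = 1) (μ : Measure X) [IsProbabilityMeasure μ]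
    {f g : X → ℝ} (hf : Integrable f μ) (hg : Integrable g μ) {c : ℝ}
    (hgf : ∀ y, g y ≤ f y + c) (hfg : ∀ i, f (x i) + c ≤ g (x i)) :
    let ν := ∑ i, ENNReal.ofReal (α i) • Measure.dirac (x i)
    ∫ y, f y ∂ν - ∫ y, f y ∂μ ≤ ∫ y, g y ∂ν - ∫ y, g y ∂μ := by
  intro ν
  have hν : ∫ y, f y ∂ν + c ≤ ∫ y, g y ∂ν := by
    simp only [ν, integral_sum_smul_dirac x hα]
    calc ∑ i, α i * f (x i) + c = ∑ i, α i * (f (x i) + c) := by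
          simp [mul_add, Finset.sum_add_distrib, ← Finset.sum_mul, hsum]
      _ ≤ ∑ i, α i * g (x i) :=
          Finset.sum_le_sum fun i _ => mul_le_mul_of_nonneg_left (hfg i) (hα i)
  have hμ : ∫ y, g y ∂μ ≤ ∫ y, f y ∂μ + c := by
    calc ∫ y, g y ∂μ ≤ ∫ y, (f y + c) ∂μ := integral_mono hg (hf.add (integrable_const c)) hgf
      _ = ∫ y, f y ∂μ + c := by simp [integral_add hf (integrable_const c)]
  linarith

end Discrete

theorem LipschitzWith.integrable_of_abs_le_one {S : Type*} [MetricSpace S] [MeasurableSpace S]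
    [OpensMeasurableSpace S] {μ : Measure S} [IsFiniteMeasure μ] {K : NNReal} {f : S → ℝ}
    (hf : LipschitzWith K f) (hf1 : ∀ y, |f y| ≤ 1) : Integrable f μ :=
  .of_bound hf.continuous.aestronglyMeasurable 1 (.of_forall hf1)

theorem exists_coneEnvelope_integral_sub_ge {S ι : Type*} [MetricSpace S] [MeasurableSpace S]
    [BorelSpace S] [Fintype ι] (hne : (univ : Finset ι).Nonempty) (x : ι → S) {α : ι → ℝ}
    (hα : ∀ i, 0 ≤ α i) (hsum : ∑ i, α i = 1) (μ : Measure S) [IsProbabilityMeasure μ]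
    {f : S → ℝ} (hf : LipschitzWith 1 f) (hf1 : ∀ y, |f y| ≤ 1) :
    let ν := ∑ i, ENNReal.ofReal (α i) • Measure.dirac (x i)
    ∃ θ : ι → ℝ, (∀ i, θ i ∈ Set.Icc (-1 : ℝ) 1) ∧ univ.sup' hne θ = 1 ∧
      ∫ y, f y ∂ν - ∫ y, f y ∂μ ≤
        ∫ y, coneEnvelope hne x θ y ∂ν - ∫ y, coneEnvelope hne x θ y ∂μ := by
  set c := 1 - univ.sup' hne fun i => f (x i)
  set θ := fun i => f (x i) + c
  have hc : 0 ≤ c := sub_nonneg.2 (Finset.sup'_le _ _ fun i _ => (abs_le.1 (hf1 (x i))).2)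
  have hθ1 : univ.sup' hne θ = 1 := by simp [θ, c, ← Finset.sup'_add]
  have hθ_le : ∀ i ∈ univ, θ i ≤ 1 := fun i hi => hθ1 ▸ Finset.le_sup' θ hi
  have hfc : LipschitzWith 1 fun y => f y + c := by simpa using hf.add (LipschitzWith.const c)
  refine ⟨θ, fun i => ⟨?_, hθ_le i (mem_univ i)⟩, hθ1,
    integral_sub_integral_le_of_le_add_const x hα hsum μ (hf.integrable_of_abs_le_one hf1)
      ((lipschitzWith_coneEnvelope hne x θ).integrable_of_abs_le_one
        (abs_coneEnvelope_le_one hne x hθ_le))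
      (fun y => coneEnvelope_le hne x hfc (fun i _ => le_rfl) (by linarith [abs_le.1 (hf1 y)]))
      (fun i => le_coneEnvelope_self hne x θ (mem_univ i))⟩
  linarith [abs_le.1 (hf1 (x i))]

theorem stmt_4_general {S : Type*} [MetricSpace S] [MeasurableSpace S] [BorelSpace S]
    {N : ℕ} (hN : 0 < N) (x : Fin N → S)
    (α : Fin N → ℝ) (hα : ∀ i, 0 < α i) (hsum : ∑ i, α i = 1)
    (μ : Measure S) [IsProbabilityMeasure μ] :
    let ν : Measure S := ∑ i, ENNReal.ofReal (α i) • Measure.dirac (x i)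
    let hθ : (Fin N → ℝ) → S → ℝ := fun θ y =>
      max (-1) (Finset.univ.sup' ⟨⟨0, hN⟩, Finset.mem_univ _⟩
        (fun i => θ i - dist (x i) y))
    sSup {r : ℝ | ∃ f : S → ℝ, LipschitzWith 1 f ∧ (∀ y, |f y| ≤ 1) ∧
        r = ∫ y, f y ∂ν - ∫ y, f y ∂μ}
      = sSup {r : ℝ | ∃ θ : Fin N → ℝ, (∀ i, θ i ∈ Set.Icc (-1 : ℝ) 1) ∧
        Finset.univ.sup' ⟨⟨0, hN⟩, Finset.mem_univ _⟩ θ = 1 ∧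
        r = ∫ y, hθ θ y ∂ν - ∫ y, hθ θ y ∂μ} := by
  intro ν hθ
  have hne : (univ : Finset (Fin N)).Nonempty := ⟨⟨0, hN⟩, mem_univ _⟩
  change sSup _ = sSup {r | ∃ θ, _ ∧ _ ∧ r = ∫ y, coneEnvelope hne x θ y ∂ν - _}
  apply csSup_eq_csSup_of_forall_exists_le
  · rintro _ ⟨f, hf, hf1, rfl⟩
    obtain ⟨θ, hθ_mem, hθ1, hle⟩ :=
      exists_coneEnvelope_integral_sub_ge hne x (fun i => (hα i).le) hsum μ hf hf1
    exact ⟨_, ⟨θ, hθ_mem, hθ1, rfl⟩, hle⟩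
  · rintro _ ⟨θ, hθ_mem, -, rfl⟩
    exact ⟨_, ⟨_, lipschitzWith_coneEnvelope hne x θ,
      abs_coneEnvelope_le_one hne x fun i _ => (hθ_mem i).2, rfl⟩, le_rfl⟩

/-- Proposition 2.2 (probability measures, max θ_i = 1). -/
theorem stmt_4 {S : Type*} [MetricSpace S] [MeasurableSpace S] [BorelSpace S]
    {N : ℕ} (hN : 0 < N) (x : Fin N → S) (hx : Function.Injective x)
    (α : Fin N → ℝ) (hα : ∀ i, 0 < α i) (hsum : ∑ i, α i = 1)
    (μ : Measure S) [IsProbabilityMeasure μ] :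
    let ν : Measure S := ∑ i, ENNReal.ofReal (α i) • Measure.dirac (x i)
    let hθ : (Fin N → ℝ) → S → ℝ := fun θ y =>
      max (-1) (Finset.univ.sup' ⟨⟨0, hN⟩, Finset.mem_univ _⟩
        (fun i => θ i - dist (x i) y))
    sSup {r : ℝ | ∃ f : S → ℝ, LipschitzWith 1 f ∧ (∀ y, |f y| ≤ 1) ∧
        r = ∫ y, f y ∂ν - ∫ y, f y ∂μ}
      = sSup {r : ℝ | ∃ θ : Fin N → ℝ, (∀ i, θ i ∈ Set.Icc (-1 : ℝ) 1) ∧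
        Finset.univ.sup' ⟨⟨0, hN⟩, Finset.mem_univ _⟩ θ = 1 ∧
        r = ∫ y, hθ θ y ∂ν - ∫ y, hθ θ y ∂μ} :=
  stmt_4_general hN x α hα hsum μ
end

section
/- Let x ∈ S and μ a finite positive Borel measure on S with μ(S) < 1. Then ‖δ_x − μ‖*_FM = 1 − μ(S) + ∫_S min(2, d(x,y)) dμ(y). -/
/-!
For `f` 1-Lipschitz with `|f| ≤ 1` we have `f x - f y ≤ min 2 (d(x, y))`, and
`∫ f dδₓ - ∫ f dμ = (1 - μ(S)) f(x) + ∫ (f x - f y) dμ(y)`. Since `1 - μ(S) ≥ 0` and `f x ≤ 1`, this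
is at most `1 - μ(S) + ∫ min 2 (d(x, y)) dμ(y)`, with equality for `f = 1 - min 2 (d(x, ·))`.
-/

open MeasureTheory

section Metric

variable {α : Type*} [PseudoMetricSpace α]

theorem LipschitzWith.sub_le_min_two_dist {f : α → ℝ} (hf : LipschitzWith 1 f)
    (hb : ∀ y, |f y| ≤ 1) (x y : α) : f x - f y ≤ min 2 (dist x y) := by
  refine le_min ?_ ?_
  · linarith [(abs_le.mp (hb x)).2, (abs_le.mp (hb y)).1]
  · simpa [Real.dist_eq] using (le_abs_self _).trans (hf.dist_le_mul x y)

theorem lipschitzWith_one_sub_min_two_dist (x : α) :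
    LipschitzWith 1 fun y => 1 - min 2 (dist x y) := by
  simpa using (LipschitzWith.const (1 : ℝ)).sub ((LipschitzWith.dist_right x).const_min 2)

theorem abs_one_sub_min_two_dist_le (x y : α) : |1 - min 2 (dist x y)| ≤ 1 := by
  have h₀ : 0 ≤ min 2 (dist x y) := le_min zero_le_two dist_nonneg
  have h₂ : min 2 (dist x y) ≤ 2 := min_le_left _ _
  rw [abs_le]
  constructor <;> linarith

end Metric

theorem Continuous.integrable_of_abs_le {α : Type*} [TopologicalSpace α] [MeasurableSpace α]
    [OpensMeasurableSpace α] {μ : Measure α} [IsFiniteMeasure μ] {f : α → ℝ} (hf : Continuous f)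
    {C : ℝ} (hb : ∀ y, |f y| ≤ C) : Integrable f μ :=
  .of_bound hf.aestronglyMeasurable C (ae_of_all _ hb)

theorem integral_dirac_sub_integral {α : Type*} [MeasurableSpace α] [MeasurableSingletonClass α]
    {μ : Measure α} [IsFiniteMeasure μ] {f : α → ℝ} (hf : Integrable f μ) (x : α) :
    ∫ y, f y ∂Measure.dirac x - ∫ y, f y ∂μ
      = (1 - μ.real Set.univ) * f x + ∫ y, (f x - f y) ∂μ := by
  rw [integral_dirac, integral_sub (integrable_const _) hf, integral_const, smul_eq_mul]
  ring

section FortetMourier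

variable {S : Type*} [MetricSpace S] [MeasurableSpace S] [BorelSpace S]
  {μ : Measure S} [IsFiniteMeasure μ]

theorem integrable_min_two_dist (x : S) : Integrable (fun y => min 2 (dist x y)) μ :=
  (continuous_const.min (continuous_const.dist continuous_id)).integrable_of_abs_le
    fun y => by rw [abs_of_nonneg (le_min zero_le_two dist_nonneg)]; exact min_le_left _ _

theorem integral_dirac_sub_integral_le (hμ : μ Set.univ ≤ 1) {f : S → ℝ}
    (hf : LipschitzWith 1 f) (hb : ∀ y, |f y| ≤ 1) (x : S) :
    ∫ y, f y ∂Measure.dirac x - ∫ y, f y ∂μ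
      ≤ 1 - μ.real Set.univ + ∫ y, min 2 (dist x y) ∂μ := by
  have hM : μ.real Set.univ ≤ 1 := by
    simpa [measureReal_def] using ENNReal.toReal_mono ENNReal.one_ne_top hμ
  have hfμ : Integrable f μ := hf.continuous.integrable_of_abs_le hb
  have hmass : (1 - μ.real Set.univ) * f x ≤ 1 - μ.real Set.univ :=
    mul_le_of_le_one_right (sub_nonneg.mpr hM) (abs_le.mp (hb x)).2
  have hgap : ∫ y, (f x - f y) ∂μ ≤ ∫ y, min 2 (dist x y) ∂μ :=
    integral_mono ((integrable_const _).sub hfμ) (integrable_min_two_dist x)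
      (hf.sub_le_min_two_dist hb x)
  rw [integral_dirac_sub_integral hfμ]
  linarith

theorem integral_dirac_sub_integral_one_sub_min_two_dist (x : S) :
    ∫ y, (1 - min 2 (dist x y)) ∂Measure.dirac x - ∫ y, (1 - min 2 (dist x y)) ∂μ
      = 1 - μ.real Set.univ + ∫ y, min 2 (dist x y) ∂μ := by
  rw [integral_dirac, integral_sub (integrable_const _) (integrable_min_two_dist x),
    integral_const, smul_eq_mul, dist_self, min_eq_right zero_le_two]
  ring

end FortetMourier

/-- ‖δ_x − μ‖*_FM when μ(S) < 1. -/
theorem stmt_11 {S : Type*} [MetricSpace S] [MeasurableSpace S] [BorelSpace S]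
    (x : S) (μ : Measure S) [IsFiniteMeasure μ] (hμ : μ Set.univ < 1) :
    sSup {r : ℝ | ∃ f : S → ℝ, LipschitzWith 1 f ∧ (∀ y, |f y| ≤ 1) ∧
        r = ∫ y, f y ∂(Measure.dirac x) - ∫ y, f y ∂μ}
      = 1 - (μ Set.univ).toReal + ∫ y, min 2 (dist x y) ∂μ := by
  rw [← measureReal_def]
  refine IsGreatest.csSup_eq ⟨?_, ?_⟩
  · exact ⟨_, lipschitzWith_one_sub_min_two_dist x, abs_one_sub_min_two_dist_le x,
      (integral_dirac_sub_integral_one_sub_min_two_dist x).symm⟩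
  · rintro r ⟨f, hf, hb, rfl⟩
    exact integral_dirac_sub_integral_le hμ.le hf hb x
end
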